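/- arXiv:1301.0251 — 10 statements merged into one kernel-verified Lean document; each statement's English description precedes it below -/
import Mathlib

section
/- Let p be any prime, and let n, m, s, r be nonnegative integers with n ≥ m, s ≥ 1, 1 ≤ r ≤ p^s − 1, and p ∤ r. Then C(n·p^s, m·p^s + r) ≡ (−1)^(r−1) · r⁻¹ · (m+1) · C(n, m+1) · p^s (mod p^(s+1)), where r⁻¹ denotes the inverse of r modulo p. -/
/-!
Write `q = p ^ s`, `N = n q` and `K = m q + r`. Lucas' theorem in base `q`, applied to
`N - 1 = (n - 1) q + (q - 1)` and `K - 1 = m q + (r - 1)`, together with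
`C(q - 1, j) ≡ (-1) ^ j (mod p)` (from `p ∣ C(q, j)` and Pascal's rule), gives
`C(N - 1, K - 1) ≡ (-1) ^ (r - 1) C(n - 1, m) (mod p)`. Multiplying by `N = n q` and using the
absorption identity `K C(N, K) = N C(N - 1, K - 1)`, where `m q C(N, K) ≡ 0 (mod p q)` because
Lucas also gives `p ∣ C(N, K)`, yields `r C(N, K) ≡ (-1) ^ (r - 1) (m + 1) C(n, m + 1) q (mod p q)`.
Since `r` is prime to `p`, this forces `q ∣ C(N, K)`, so `r` may be cancelled against `r⁻¹`.
-/

namespace Choose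

variable {p : ℕ} [Fact p.Prime]

theorem choose_mul_pow_add_modEq {s b d : ℕ} (a c : ℕ) (hb : b < p ^ s) (hd : d < p ^ s) :
    (a * p ^ s + b).choose (c * p ^ s + d) ≡ a.choose c * b.choose d [ZMOD p] := by
  induction s generalizing b d with
  | zero =>
    obtain rfl : b = 0 := by simpa using hb
    obtain rfl : d = 0 := by simpa using hd
    simp [Int.ModEq.refl]
  | succ s ih =>
    have hp : 0 < p := (Fact.out : p.Prime).pos
    have hdiv : ∀ x y, (x * p ^ (s + 1) + y) / p = x * p ^ s + y / p := fun x y => by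
      rw [pow_succ, ← mul_assoc, mul_comm _ p, Nat.mul_add_div hp]
    have hmod : ∀ x y, (x * p ^ (s + 1) + y) % p = y % p := fun x y => by
      rw [pow_succ, ← mul_assoc, mul_comm _ p, Nat.mul_add_mod]
    have hlt : ∀ {y}, y < p ^ (s + 1) → y / p < p ^ s := fun hy =>
      Nat.div_lt_of_lt_mul (by rwa [← pow_succ'])
    calc ((a * p ^ (s + 1) + b).choose (c * p ^ (s + 1) + d) : ℤ)
        ≡ (b % p).choose (d % p) * (a * p ^ s + b / p).choose (c * p ^ s + d / p) [ZMOD p] := by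
          simpa only [hdiv, hmod] using choose_modEq_choose_mod_mul_choose_div (p := p)
            (n := a * p ^ (s + 1) + b) (k := c * p ^ (s + 1) + d)
      _ ≡ (b % p).choose (d % p) * (a.choose c * (b / p).choose (d / p)) [ZMOD p] :=
          (ih (hlt hb) (hlt hd)).mul_left _
      _ = a.choose c * ((b % p).choose (d % p) * (b / p).choose (d / p)) := by ring
      _ ≡ a.choose c * b.choose d [ZMOD p] :=
          (choose_modEq_choose_mod_mul_choose_div (p := p)).symm.mul_left _

theorem choose_pow_sub_one_modEq {s j : ℕ} (hj : j < p ^ s) :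
    ((p ^ s - 1).choose j : ℤ) ≡ (-1) ^ j [ZMOD p] := by
  induction j with
  | zero => simp [Int.ModEq.refl]
  | succ j ih =>
    have hpow : p ^ s - 1 + 1 = p ^ s := by omega
    have hpascal : ((p ^ s - 1).choose (j + 1) : ℤ) =
        (p ^ s).choose (j + 1) - (p ^ s - 1).choose j := by
      rw [← hpow, Nat.choose_succ_succ, hpow]; push_cast; ring
    have hdvd : (p : ℤ) ∣ (p ^ s).choose (j + 1) := Int.natCast_dvd_natCast.mpr <|
      Nat.Prime.dvd_choose_pow Fact.out j.succ_ne_zero hj.ne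
    calc ((p ^ s - 1).choose (j + 1) : ℤ)
        ≡ 0 - (-1) ^ j [ZMOD p] :=
          hpascal ▸ (Int.modEq_zero_iff_dvd.mpr hdvd).sub (ih (by omega))
      _ = (-1) ^ (j + 1) := by ring

theorem prime_dvd_choose_mul_pow_add (n m : ℕ) {s r : ℕ} (hr0 : 0 < r) (hr : r < p ^ s) :
    (p : ℤ) ∣ (n * p ^ s).choose (m * p ^ s + r) := by
  have := choose_mul_pow_add_modEq (p := p) n m (b := 0) (pow_pos (Fact.out : p.Prime).pos s) hr
  rw [Nat.choose_eq_zero_of_lt hr0] at this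
  simpa [Int.modEq_zero_iff_dvd] using this

theorem mul_choose_mul_pow_add_modEq (n m : ℕ) {s r : ℕ} (hr0 : 0 < r) (hr : r < p ^ s) :
    (r : ℤ) * (n * p ^ s).choose (m * p ^ s + r) ≡
      (-1) ^ (r - 1) * (m + 1) * n.choose (m + 1) * p ^ s [ZMOD p ^ (s + 1)] := by
  cases n with
  | zero => simp [Nat.choose_eq_zero_of_lt, hr0, Int.ModEq.refl]
  | succ n =>
    set q := p ^ s
    have hq : 0 < q := pow_pos (Fact.out : p.Prime).pos s
    have hpascal : (((n + 1) * q : ℕ) : ℤ) * (n * q + (q - 1)).choose (m * q + (r - 1)) =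
        (((n + 1) * q).choose (m * q + r) : ℤ) * (m * q + r : ℕ) := by
      have hN : n * q + (q - 1) + 1 = (n + 1) * q := by rw [add_one_mul]; omega
      have hK : m * q + (r - 1) + 1 = m * q + r := by omega
      exact_mod_cast (hN ▸ hK ▸ Nat.add_one_mul_choose_eq (n * q + (q - 1)) (m * q + (r - 1)))
    have hlucas : ((n * q + (q - 1)).choose (m * q + (r - 1)) : ℤ) ≡
        n.choose m * (-1) ^ (r - 1) [ZMOD p] :=
      (choose_mul_pow_add_modEq n m (by omega) (by omega)).trans
        ((choose_pow_sub_one_modEq (by omega)).mul_left _)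
    have habsorb : ((n + 1) * n.choose m : ℤ) = (m + 1) * (n + 1).choose (m + 1) := by
      exact_mod_cast (Nat.add_one_mul_choose_eq n m).trans (mul_comm _ _)
    rw [pow_succ]
    calc (r : ℤ) * ((n + 1) * q).choose (m * q + r)
        = q * ((n + 1) * (n * q + (q - 1)).choose (m * q + (r - 1))) -
            q * (m * ((n + 1) * q).choose (m * q + r)) := by
          push_cast at hpascal; linear_combination -hpascal
      _ ≡ q * ((n + 1) * (n.choose m * (-1) ^ (r - 1))) - 0 [ZMOD q * p] :=
          (hlucas.mul_left _).mul_left'.sub <| Int.modEq_zero_iff_dvd.mpr <|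
            mul_dvd_mul_left _ (dvd_mul_of_dvd_right (prime_dvd_choose_mul_pow_add _ _ hr0 hr) _)
      _ = (-1) ^ (r - 1) * (m + 1) * (n + 1).choose (m + 1) * q := by
          linear_combination q * (-1) ^ (r - 1) * habsorb

end Choose

theorem Int.modEq_mul_of_mul_modEq {p q r a c u : ℤ} (hq : q ≠ 0) (hqr : IsCoprime q r)
    (hu : r * u ≡ 1 [ZMOD p]) (h : r * a ≡ c * q [ZMOD q * p]) : a ≡ u * c * q [ZMOD q * p] := by
  obtain ⟨v, rfl⟩ : q ∣ a := hqr.dvd_of_dvd_mul_left <| by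
    simpa [mul_comm, dvd_sub_right] using (dvd_mul_right q p).trans h.dvd
  have hv : r * v ≡ c [ZMOD p] := Int.ModEq.mul_left_cancel' hq (by convert h using 1 <;> ring)
  have hv' : v ≡ u * c [ZMOD p] := calc
    v = 1 * v := (one_mul v).symm
    _ ≡ r * u * v [ZMOD p] := hu.symm.mul_right v
    _ = u * (r * v) := by ring
    _ ≡ u * c [ZMOD p] := hv.mul_left u
  simpa only [mul_comm _ q] using hv'.mul_left' (c := q)

theorem stmt0_general (p n m s r : ℕ) (hp : p.Prime)
    (hr1 : 1 ≤ r) (hr2 : r ≤ p ^ s - 1) (hpr : ¬ p ∣ r)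
    (rinv : ℤ) (hinv : (r : ℤ) * rinv ≡ 1 [ZMOD (p : ℤ)]) :
    (((n * p ^ s).choose (m * p ^ s + r) : ℤ)) ≡
      (-1) ^ (r - 1) * rinv * (m + 1) * (n.choose (m + 1)) * (p : ℤ) ^ s
      [ZMOD ((p : ℤ) ^ (s + 1))] := by
  have : Fact p.Prime := ⟨hp⟩
  have hq : (p : ℤ) ^ s ≠ 0 := pow_ne_zero s (Int.natCast_ne_zero.mpr hp.ne_zero)
  have hcop : IsCoprime ((p : ℤ) ^ s) r :=
    (Nat.isCoprime_iff_coprime.mpr (hp.coprime_iff_not_dvd.mpr hpr)).pow_left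
  have key := Choose.mul_choose_mul_pow_add_modEq n m hr1 (show r < p ^ s by omega)
  rw [pow_succ] at key ⊢
  convert Int.modEq_mul_of_mul_modEq hq hcop hinv key using 2
  ring

theorem stmt0 (p n m s r : ℕ) (hp : p.Prime) (hmn : m ≤ n) (hs : 1 ≤ s)
    (hr1 : 1 ≤ r) (hr2 : r ≤ p ^ s - 1) (hpr : ¬ p ∣ r)
    (rinv : ℤ) (hinv : (r : ℤ) * rinv ≡ 1 [ZMOD (p : ℤ)]) :
    (((n * p ^ s).choose (m * p ^ s + r) : ℤ)) ≡
      (-1) ^ (r - 1) * rinv * (m + 1) * (n.choose (m + 1)) * (p : ℤ) ^ s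
      [ZMOD ((p : ℤ) ^ (s + 1))] :=
  stmt0_general p n m s r hp hr1 hr2 hpr rinv hinv
end

section
/- Let p be any prime and n, m, s nonnegative integers with n ≥ m and s ≥ 1. Let r = Σ_{j=0}^{s−1} a_j p^j with 1 ≤ a_0 ≤ p−1 and 0 ≤ a_j ≤ p−1 for j ≥ 1 (so 1 ≤ r ≤ p^s − 1 and p ∤ r). Then C(n·p^s, m·p^s + r) ≡ (m+1) · C(n, m+1) · C(p^s, r) (mod p^(s+1)). -/
/-!
Work in `R = ZMod (p ^ (s + 1))` and split `(X + 1) ^ p ^ s = E + A` with `A = X ^ p ^ s + 1`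
and `E` the middle binomial terms. Every coefficient of `E` is divisible by `p`, and those at
exponents prime to `p` by `p ^ s`; since `p * p ^ s = 0` in `R`, the powers `E ^ k` with `k ≥ 2`
vanish at all exponents prime to `p`, while `A` only has exponents divisible by `p ^ s`.
As `p ∤ m * p ^ s + r`, in the binomial expansion of `(E + A) ^ (n + 1)` only the term
`(n + 1) * E * A ^ n` contributes to the coefficient of `X ^ (m * p ^ s + r)`, and it contributes
`(n + 1) * C(n, m) * C(p ^ s, r)`.
-/

open Finset Polynomial

namespace Nat

lemma sum_mul_pow_lt {b s : ℕ} {d : ℕ → ℕ} (hd : ∀ j < s, d j < b) :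
    ∑ j ∈ range s, d j * b ^ j < b ^ s := by
  induction s with
  | zero => simp
  | succ s ih =>
    have hlow := ih fun j hj => hd j (by omega)
    have hs := hd s (by omega)
    calc ∑ j ∈ range (s + 1), d j * b ^ j
        < b ^ s + d s * b ^ s := by rw [sum_range_succ]; omega
      _ = (d s + 1) * b ^ s := by ring
      _ ≤ b * b ^ s := Nat.mul_le_mul_right _ hs
      _ = b ^ (s + 1) := by ring

lemma not_dvd_sum_mul_pow {b s : ℕ} {d : ℕ → ℕ} (hs : s ≠ 0) (hd : ¬ b ∣ d 0) :
    ¬ b ∣ ∑ j ∈ range s, d j * b ^ j := by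
  obtain ⟨s, rfl⟩ := exists_eq_succ_of_ne_zero hs
  rw [sum_range_succ', pow_zero, mul_one,
    Nat.dvd_add_right (dvd_sum fun j _ => dvd_mul_of_dvd_right (dvd_pow_self b j.succ_ne_zero) _)]
  exact hd

lemma Prime.pow_dvd_choose_pow_of_not_dvd {p s j : ℕ} (hp : p.Prime) (hj : ¬ p ∣ j) :
    p ^ s ∣ (p ^ s).choose j := by
  rcases lt_or_ge (p ^ s) j with hlt | hle
  · rw [choose_eq_zero_of_lt hlt]; exact dvd_zero _
  · apply pow_dvd_of_le_emultiplicity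
    rw [hp.emultiplicity_choose_prime_pow hle (by rintro rfl; exact hj (dvd_zero p)),
      multiplicity_eq_zero.mpr hj, Nat.sub_zero]

end Nat

namespace Polynomial

section CommSemiring

variable {R : Type*} [CommSemiring R]

lemma coeff_mul_eq_zero_of_not_dvd {p j : ℕ} {f g : R[X]} (hj : ¬ p ∣ j)
    (h : ∀ a b, ¬ p ∣ a ∨ ¬ p ∣ b → f.coeff a * g.coeff b = 0) : (f * g).coeff j = 0 := by
  rw [coeff_mul]
  refine sum_eq_zero fun x hx => h x.1 x.2 ?_
  rw [HasAntidiagonal.mem_antidiagonal] at hx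
  by_contra! hdvd
  exact hj (hx ▸ dvd_add hdvd.1 hdvd.2)

variable (R) in
def supportedOnMultiples (p : ℕ) : Subsemiring R[X] where
  carrier := {f | ∀ j, ¬ p ∣ j → f.coeff j = 0}
  mul_mem' {f g} hf hg j hj := coeff_mul_eq_zero_of_not_dvd hj fun a b hab => by
    rcases hab with ha | hb
    · rw [hf a ha, zero_mul]
    · rw [hg b hb, mul_zero]
  one_mem' j hj := by
    rw [coeff_one, if_neg]
    rintro rfl
    exact hj (dvd_zero p)
  add_mem' hf hg j hj := by rw [coeff_add, hf j hj, hg j hj, add_zero]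
  zero_mem' j _ := coeff_zero j

lemma expand_mem_supportedOnMultiples {p q : ℕ} (hpq : p ∣ q) (hq : 0 < q) (f : R[X]) :
    expand R q f ∈ supportedOnMultiples R p := fun j hj => by
  rw [coeff_expand hq, if_neg fun hqj => hj (hpq.trans hqj)]

def DvdCoeffs (p : ℕ) (u v : R) (f : R[X]) : Prop :=
  (∀ i, u ∣ f.coeff i) ∧ ∀ i, ¬ p ∣ i → v ∣ f.coeff i

namespace DvdCoeffs

variable {p : ℕ} {u v : R} {f g : R[X]}

lemma mul_mem (huv : u * v = 0) (hf : DvdCoeffs p u v f) (hg : DvdCoeffs p u v g) :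
    f * g ∈ supportedOnMultiples R p := fun j hj =>
  coeff_mul_eq_zero_of_not_dvd hj fun a b hab => by
    rcases hab with ha | hb
    · obtain ⟨c, hc⟩ := hf.2 a ha
      obtain ⟨d, hd⟩ := hg.1 b
      rw [hc, hd, mul_mul_mul_comm, mul_comm v, huv, zero_mul]
    · obtain ⟨c, hc⟩ := hf.1 a
      obtain ⟨d, hd⟩ := hg.2 b hb
      rw [hc, hd, mul_mul_mul_comm, huv, zero_mul]

lemma pow (huv : u * v = 0) (hf : DvdCoeffs p u v f) : ∀ {k : ℕ}, k ≠ 0 → DvdCoeffs p u v (f ^ k)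
  | 1, _ => by rwa [pow_one]
  | k + 2, _ => by
    have ih := pow huv hf k.succ_ne_zero
    rw [pow_succ]
    refine ⟨fun i => ?_, fun i hi => ?_⟩
    · rw [coeff_mul]
      exact dvd_sum fun x _ => dvd_mul_of_dvd_left (ih.1 x.1) _
    · rw [ih.mul_mem huv hf i hi]
      exact dvd_zero v

lemma pow_mem (huv : u * v = 0) (hf : DvdCoeffs p u v f) {k : ℕ} (hk : 2 ≤ k) :
    f ^ k ∈ supportedOnMultiples R p := by
  obtain ⟨k, rfl⟩ := Nat.exists_eq_add_of_le' hk
  rw [pow_succ]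
  exact (hf.pow huv (by omega)).mul_mem huv hf

end DvdCoeffs

lemma coeff_mul_expand_mul_add {q m r : ℕ} {f : R[X]} (hf : f.degree < q) (hr : r < q)
    (g : R[X]) : (f * expand R q g).coeff (m * q + r) = f.coeff r * g.coeff m := by
  have hq : 0 < q := by omega
  rw [coeff_mul, sum_eq_single (r, m * q)]
  · rw [coeff_expand hq, if_pos (dvd_mul_left q m), Nat.mul_div_cancel m hq]
  · rintro ⟨a, b⟩ hab hne
    rw [HasAntidiagonal.mem_antidiagonal] at hab
    rcases lt_or_ge a q with ha | ha
    · rw [coeff_expand hq, if_neg, mul_zero]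
      rintro ⟨c, rfl⟩
      obtain ⟨hc, hac⟩ := (Nat.div_mod_unique hq).mpr ⟨hab, ha⟩
      obtain ⟨hm, hrm⟩ := (Nat.div_mod_unique hq).mpr ⟨(by ring : r + q * m = m * q + r), hr⟩
      exact hne (Prod.ext (hac.symm.trans hrm) (by rw [← hc, hm, mul_comm]))
    · rw [coeff_eq_zero_of_degree_lt (hf.trans_le (by exact_mod_cast ha)), zero_mul]
  · exact fun h => absurd (HasAntidiagonal.mem_antidiagonal.mpr (add_comm _ _)) h

end CommSemiring

section CommRing

variable {R : Type*} [CommRing R]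

variable (R) in
noncomputable def innerBinomial (q : ℕ) : R[X] := (X + 1) ^ q - (X ^ q + 1)

lemma coeff_innerBinomial {q : ℕ} (hq : q ≠ 0) (j : ℕ) :
    (innerBinomial R q).coeff j = if 0 < j ∧ j < q then (q.choose j : R) else 0 := by
  rw [innerBinomial, coeff_sub, coeff_X_add_one_pow, coeff_add, coeff_X_pow, coeff_one]
  rcases Nat.lt_trichotomy j q with hj | rfl | hj
  · rcases Nat.eq_zero_or_pos j with rfl | hj0
    · simp [Ne.symm hq]
    · simp [hj.ne, hj0.ne', hj0, hj]
  · simp [hq]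
  · simp [hj.ne', Nat.choose_eq_zero_of_lt hj, hj.not_gt, (Nat.zero_le q).trans_lt hj |>.ne']

lemma degree_innerBinomial_lt {q : ℕ} (hq : q ≠ 0) : (innerBinomial R q).degree < q := by
  rw [degree_lt_iff_coeff_zero]
  intro j hj
  rw [coeff_innerBinomial hq, if_neg (by omega)]

lemma dvdCoeffs_innerBinomial {p s : ℕ} (hp : p.Prime) :
    DvdCoeffs p (p : R) (p ^ s) (innerBinomial R (p ^ s)) := by
  refine ⟨fun i => ?_, fun i hi => ?_⟩ <;> rw [coeff_innerBinomial (pow_ne_zero s hp.ne_zero)] <;>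
    split_ifs with hi' <;> try exact dvd_zero _
  · exact_mod_cast Nat.cast_dvd_cast (hp.dvd_choose_pow hi'.1.ne' hi'.2.ne)
  · exact_mod_cast Nat.cast_dvd_cast (hp.pow_dvd_choose_pow_of_not_dvd hi)

end CommRing

end Polynomial

theorem Nat.choose_add_one_mul_prime_pow_add {p s r : ℕ} (hp : p.Prime) (hrq : r < p ^ s)
    (hpr : ¬ p ∣ r) (n m : ℕ) :
    (((n + 1) * p ^ s).choose (m * p ^ s + r) : ZMod (p ^ (s + 1))) =
      (n + 1) * n.choose m * (p ^ s).choose r := by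
  have hs : s ≠ 0 := by
    rintro rfl
    exact hpr (Nat.lt_one_iff.mp (pow_zero p ▸ hrq) ▸ dvd_zero p)
  have hq : 0 < p ^ s := pow_pos hp.pos s
  have hN : ¬ p ∣ m * p ^ s + r :=
    (Nat.dvd_add_right (dvd_mul_of_dvd_right (dvd_pow_self p hs) m)).not.mpr hpr
  set R := ZMod (p ^ (s + 1))
  set E := innerBinomial R (p ^ s)
  set A := expand R (p ^ s) (X + 1)
  have hsplit : (X + 1) ^ p ^ s = E + A := by simp [E, A, innerBinomial]
  have hEk : ∀ k, 2 ≤ k → E ^ k ∈ supportedOnMultiples R p :=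
    fun k => (dvdCoeffs_innerBinomial hp).pow_mem (by
      simpa [pow_succ'] using ZMod.natCast_self (p ^ (s + 1)))
  rw [← coeff_X_add_one_pow, pow_mul', hsplit, add_pow, finsetSum_coeff, sum_eq_single 1]
  · rw [pow_one, Nat.add_sub_cancel, ← map_pow, Nat.choose_one_right, coeff_mul_natCast,
      coeff_mul_expand_mul_add (degree_innerBinomial_lt hq.ne') hrq, coeff_innerBinomial hq.ne',
      if_pos ⟨Nat.pos_of_ne_zero (by rintro rfl; exact hpr (dvd_zero p)), hrq⟩, coeff_X_add_one_pow]
    push_cast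
    ring
  · rintro (_ | _ | k) _ hk1
    · rw [pow_zero, one_mul, ← map_pow, coeff_mul_natCast, coeff_expand hq,
        if_neg fun h => hN ((dvd_pow_self p hs).trans h), zero_mul]
    · exact absurd rfl hk1
    · have hA := expand_mem_supportedOnMultiples (dvd_pow_self p hs) hq (X + 1 : R[X])
      exact mul_mem (mul_mem (hEk _ le_add_self) (pow_mem hA _)) (natCast_mem _ _) _ hN
  · intro h
    simp at h

theorem stmt1_general (p n m s : ℕ) (hp : p.Prime) (hs : 1 ≤ s)
    (a : ℕ → ℕ) (ha0 : 1 ≤ a 0) (ha0' : a 0 ≤ p - 1)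
    (ha : ∀ j, 1 ≤ j → j ≤ s - 1 → a j ≤ p - 1)
    (r : ℕ) (hr : r = ∑ j ∈ Finset.range s, a j * p ^ j) :
    (((n * p ^ s).choose (m * p ^ s + r) : ℤ)) ≡
      (m + 1) * (n.choose (m + 1)) * ((p ^ s).choose r)
      [ZMOD ((p : ℤ) ^ (s + 1))] := by
  have hp2 := hp.two_le
  have hdigit : ∀ j < s, a j < p
    | 0, _ => by omega
    | j + 1, hj => by have := ha (j + 1) (by omega) (by omega); omega
  have hrq : r < p ^ s := hr ▸ Nat.sum_mul_pow_lt hdigit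
  have hpr : ¬ p ∣ r :=
    hr ▸ Nat.not_dvd_sum_mul_pow (by omega) (Nat.not_dvd_of_pos_of_lt ha0 (hdigit 0 hs))
  rw [show (p : ℤ) ^ (s + 1) = ((p ^ (s + 1) : ℕ) : ℤ) by push_cast; rfl,
    ← ZMod.intCast_eq_intCast_iff]
  push_cast
  rcases n with _ | n
  · have hr0 : 0 < r := Nat.pos_of_ne_zero (by rintro rfl; exact hpr (dvd_zero p))
    rw [zero_mul, Nat.choose_eq_zero_of_lt (by omega), Nat.choose_eq_zero_of_lt (by omega)]
    simp
  · rw [Nat.choose_add_one_mul_prime_pow_add hp hrq hpr]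
    have hpascal : ((n + 1) * n.choose m : ZMod (p ^ (s + 1))) = (n + 1).choose (m + 1) * (m + 1) :=
      mod_cast congrArg Nat.cast (Nat.add_one_mul_choose_eq n m)
    rw [hpascal]
    ring

theorem stmt1 (p n m s : ℕ) (hp : p.Prime) (hmn : m ≤ n) (hs : 1 ≤ s)
    (a : ℕ → ℕ) (ha0 : 1 ≤ a 0) (ha0' : a 0 ≤ p - 1)
    (ha : ∀ j, 1 ≤ j → j ≤ s - 1 → a j ≤ p - 1)
    (r : ℕ) (hr : r = ∑ j ∈ Finset.range s, a j * p ^ j) :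
    (((n * p ^ s).choose (m * p ^ s + r) : ℤ)) ≡
      (m + 1) * (n.choose (m + 1)) * ((p ^ s).choose r)
      [ZMOD ((p : ℤ) ^ (s + 1))] :=
  stmt1_general p n m s hp hs a ha0 ha0' ha r hr
end

section
/- For any prime p, any s ≥ 1, and any integer r with 1 ≤ r ≤ p^s − 1 and p ∤ r, the congruence C(p^s, r) · r ≡ (−1)^(r−1) · p^s (mod p^(s+1)) holds. -/
/-!
Absorbing the factor `r` gives `C(p^s, r) * r = p^s * C(p^s - 1, r - 1)`, so it suffices to know
`C(p^s - 1, k) ≡ (-1)^k (mod p)`. That follows from Pascal's rule, since `p ∣ C(p^s, k)` for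
`0 < k < p^s`.
-/

theorem Nat.Prime.choose_prime_pow_sub_one_cast_zmod {p : ℕ} (hp : p.Prime) (s : ℕ) {k : ℕ}
    (hk : k < p ^ s) : ((p ^ s - 1).choose k : ZMod p) = (-1) ^ k := by
  induction k with
  | zero => simp
  | succ k ih =>
    have hvanish : ((p ^ s).choose (k + 1) : ZMod p) = 0 :=
      (ZMod.natCast_eq_zero_iff _ _).mpr (hp.dvd_choose_pow k.succ_ne_zero hk.ne)
    have hpascal : (p ^ s).choose (k + 1) = (p ^ s - 1).choose k + (p ^ s - 1).choose (k + 1) := by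
      rw [← Nat.choose_succ_succ', Nat.sub_add_cancel (Nat.one_le_pow _ _ hp.pos)]
    rw [hpascal, Nat.cast_add, ih (by omega)] at hvanish
    linear_combination hvanish

theorem Nat.Prime.choose_prime_pow_sub_one_modEq {p : ℕ} (hp : p.Prime) (s : ℕ) {k : ℕ}
    (hk : k < p ^ s) : ((p ^ s - 1).choose k : ℤ) ≡ (-1) ^ k [ZMOD p] := by
  rw [← ZMod.intCast_eq_intCast_iff]
  push_cast
  exact hp.choose_prime_pow_sub_one_cast_zmod s hk

theorem stmt2_general (p s r : ℕ) (hp : p.Prime)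
    (hr1 : 1 ≤ r) (hr2 : r ≤ p ^ s - 1) :
    (((p ^ s).choose r : ℤ)) * r ≡ (-1) ^ (r - 1) * (p : ℤ) ^ s
      [ZMOD ((p : ℤ) ^ (s + 1))] := by
  have habsorb : ((p ^ s).choose r : ℤ) * r = (p : ℤ) ^ s * (p ^ s - 1).choose (r - 1) := by
    have h := Nat.add_one_mul_choose_eq (p ^ s - 1) (r - 1)
    rw [Nat.sub_add_cancel (Nat.one_le_pow _ _ hp.pos), Nat.sub_add_cancel hr1] at h
    exact_mod_cast h.symm
  rw [habsorb, mul_comm _ ((p : ℤ) ^ s), pow_succ]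
  exact (hp.choose_prime_pow_sub_one_modEq s (k := r - 1) (by omega)).mul_left'

theorem stmt2 (p s r : ℕ) (hp : p.Prime) (hs : 1 ≤ s)
    (hr1 : 1 ≤ r) (hr2 : r ≤ p ^ s - 1) (hpr : ¬ p ∣ r) :
    (((p ^ s).choose r : ℤ)) * r ≡ (-1) ^ (r - 1) * (p : ℤ) ^ s
      [ZMOD ((p : ℤ) ^ (s + 1))] :=
  stmt2_general p s r hp hr1 hr2
end

section
/- Let p be a prime, and let n, m, i be nonnegative integers with m ≤ n and 1 ≤ i ≤ p−1. Then C(n·p, m·p + i) ≡ (m+1) · C(n, m+1) · C(p, i) (mod p^2). -/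
/-!
Multiply by `k = m * p + i`, a unit modulo `p ^ 2`. The absorption identity
`k * C(n p, k) = n p * C(n p - 1, k - 1)` puts a factor `p` in front, so `C(n p - 1, k - 1)` is
only needed modulo `p`, where Lucas gives `C(n - 1, m) * C(p - 1, i - 1)`. Absorbing back on the
right, `n * C(n - 1, m) = (m + 1) * C(n, m + 1)` and `p * C(p - 1, i - 1) = i * C(p, i)`, and
`i * C(p, i) ≡ k * C(p, i)` modulo `p ^ 2` because `p ∣ C(p, i)`.
-/

theorem Int.ModEq.cancel_left_of_isCoprime {a b c n : ℤ} (hc : IsCoprime c n)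
    (h : c * a ≡ c * b [ZMOD n]) : a ≡ b [ZMOD n] := by
  rw [Int.modEq_iff_dvd, ← mul_sub] at *
  exact hc.symm.dvd_of_dvd_mul_left h

namespace Nat

theorem mul_choose_eq_mul_choose_sub_one {n k : ℕ} (hk : 0 < k) :
    k * n.choose k = n * (n - 1).choose (k - 1) := by
  obtain ⟨k, rfl⟩ := Nat.exists_eq_add_of_lt hk
  rcases n with _ | n
  · simp
  · simpa [mul_comm] using (add_one_mul_choose_eq n k).symm

theorem choose_mul_add_modEq {p : ℕ} [Fact p.Prime] (a b : ℕ) {c d : ℕ} (hc : c < p)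
    (hd : d < p) :
    ((a * p + c).choose (b * p + d) : ℤ) ≡ c.choose d * a.choose b [ZMOD p] := by
  have hp : 0 < p := (Fact.out : p.Prime).pos
  simpa [mul_add_mod_self_right, mod_eq_of_lt, add_mul_div_right, div_eq_of_lt, hc, hd, hp,
    add_comm] using
    Choose.choose_modEq_choose_mod_mul_choose_div (p := p) (n := a * p + c) (k := b * p + d)

theorem mul_choose_succ_mul_modEq {p : ℕ} [Fact p.Prime] (n m : ℕ) {i : ℕ} (hi : 0 < i)
    (hip : i ≤ p) :
    ((m * p + i : ℕ) : ℤ) * ((n + 1) * p).choose (m * p + i) ≡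
      (n + 1) * (p * ((p - 1).choose (i - 1) * n.choose m)) [ZMOD (p : ℤ) ^ 2] := by
  have hp : 0 < p := (Fact.out : p.Prime).pos
  have habsorb : ((m * p + i : ℕ) : ℤ) * ((n + 1) * p).choose (m * p + i) =
      (n + 1) * (p * (n * p + (p - 1)).choose (m * p + (i - 1))) := by
    have h := mul_choose_eq_mul_choose_sub_one (n := (n + 1) * p) (k := m * p + i) (by omega)
    rw [show (n + 1) * p - 1 = n * p + (p - 1) by rw [succ_mul]; omega,
      show m * p + i - 1 = m * p + (i - 1) by omega] at h
    rw [← mul_assoc]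
    exact_mod_cast h
  have hlucas := choose_mul_add_modEq (p := p) n m (c := p - 1) (d := i - 1) (by omega) (by omega)
  rw [habsorb, sq]
  exact (hlucas.mul_left' (c := (p : ℤ))).mul_left _

end Nat

theorem stmt3_general (p n m i : ℕ) (hp : p.Prime)
    (hi1 : 1 ≤ i) (hi2 : i ≤ p - 1) :
    (((n * p).choose (m * p + i) : ℤ)) ≡
      (m + 1) * (n.choose (m + 1)) * (p.choose i) [ZMOD ((p : ℤ) ^ 2)] := by
  have := Fact.mk hp
  rcases n with _ | n
  · simp [Nat.choose_eq_zero_of_lt, show 0 < m * p + i by omega]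
  have hi : i < p := by omega
  have hcop : IsCoprime ((m * p + i : ℕ) : ℤ) ((p : ℤ) ^ 2) := by
    refine (Nat.isCoprime_iff_coprime.2 (Nat.coprime_comm.1 ?_)).pow_right
    rw [hp.coprime_iff_not_dvd, Nat.dvd_add_right (dvd_mul_left p m)]
    exact Nat.not_dvd_of_pos_of_lt hi1 hi
  obtain ⟨c, hc⟩ := hp.dvd_choose_self (by omega : i ≠ 0) hi
  have h1 := Nat.mul_choose_eq_mul_choose_sub_one (n := n + 1) (k := m + 1) (by omega)
  have h2 := Nat.mul_choose_eq_mul_choose_sub_one (n := p) (k := i) (by omega)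
  simp only [add_tsub_cancel_right] at h1
  rw [← Nat.cast_inj (R := ℤ)] at h1 h2
  push_cast at h1 h2
  refine Int.ModEq.cancel_left_of_isCoprime hcop ?_
  calc
    _ ≡ (n + 1) * (p * ((p - 1).choose (i - 1) * n.choose m)) [ZMOD (p : ℤ) ^ 2] :=
      Nat.mul_choose_succ_mul_modEq (p := p) n m (by omega) (by omega)
    _ = (m + 1) * (n + 1).choose (m + 1) * (i * p.choose i) := by
      linear_combination -(i * p.choose i : ℤ) * h1 - ((n + 1) * n.choose m : ℤ) * h2
    _ ≡ _ [ZMOD (p : ℤ) ^ 2] := by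
      refine Int.modEq_iff_dvd.2 ⟨m * (m + 1) * (n + 1).choose (m + 1) * c, ?_⟩
      rw [hc]
      push_cast
      ring

theorem stmt3 (p n m i : ℕ) (hp : p.Prime) (hmn : m ≤ n)
    (hi1 : 1 ≤ i) (hi2 : i ≤ p - 1) :
    (((n * p).choose (m * p + i) : ℤ)) ≡
      (m + 1) * (n.choose (m + 1)) * (p.choose i) [ZMOD ((p : ℤ) ^ 2)] :=
  stmt3_general p n m i hp hi1 hi2
end

section
/- Let p ≥ 5 be a prime, and let n, m, k, i be nonnegative integers with m ≤ n, 0 ≤ k ≤ p−1 and 1 ≤ i ≤ p−1. Then C(n·p^2, m·p^2 + k·p + i) ≡ (m+1) · C(n, m+1) · C(p^2, k·p + i) (mod p^3). -/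
/-!
Induct on `n` with Vandermonde's identity `C(N + p², s) = ∑_b C(p², b) C(N, s - b)`, `N = np²`.
For `p² ∣ N` the identity `b C(N, b) = N C(N - 1, b - 1)` shows `p² ∣ C(N, b)` when `p ∤ b` and
`p ∣ C(N, b)` when `p² ∤ b`. For `s = mp² + r` with `p ∤ r`, one of `b`, `s - b` is prime to `p`,
so every term with `b ∉ {0, r, p²}` vanishes mod `p³`. In the term `b = r`, `p² ∣ C(p², r)` and
Lucas gives `C(np², mp²) ≡ C(n, m) mod p`; what is left is Pascal's rule for `(m + 1) C(n, m + 1)`.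
-/

open Finset

namespace Nat

theorem dvd_mul_choose (N b : ℕ) : N ∣ b * N.choose b := by
  rcases N with _ | N
  · rcases b with _ | b <;> simp
  rcases b with _ | b
  · simp
  · exact ⟨N.choose b, by rw [mul_comm, ← add_one_mul_choose_eq]⟩

theorem dvd_choose_of_dvd_of_coprime {q N b : ℕ} (hN : q ∣ N) (hb : q.Coprime b) :
    q ∣ N.choose b :=
  hb.dvd_of_dvd_mul_left (hN.trans (dvd_mul_choose N b))

namespace Prime

variable {p : ℕ}

theorem dvd_choose_of_sq_dvd {N b : ℕ} (hp : p.Prime) (hN : p ^ 2 ∣ N) (hb : ¬p ^ 2 ∣ b) :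
    p ∣ N.choose b := by
  by_cases hpb : p ∣ b
  · obtain ⟨u, rfl⟩ := hpb
    have hu : p.Coprime u :=
      hp.coprime_iff_not_dvd.2 fun h ↦ hb (by rw [sq]; exact mul_dvd_mul_left p h)
    have : p * p ∣ p * (u * N.choose (p * u)) := by
      rw [← sq, ← mul_assoc]; exact hN.trans (dvd_mul_choose _ _)
    exact hu.dvd_of_dvd_mul_left (Nat.dvd_of_mul_dvd_mul_left hp.pos this)
  · exact dvd_choose_of_dvd_of_coprime ((dvd_pow_self p two_ne_zero).trans hN)
      (hp.coprime_iff_not_dvd.2 hpb)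

theorem pow_three_dvd_choose_mul_choose {N M a b : ℕ} (hp : p.Prime) (hN : p ^ 2 ∣ N)
    (hM : p ^ 2 ∣ M) (hab : ¬p ∣ a + b) (ha : ¬p ^ 2 ∣ a) (hb : ¬p ^ 2 ∣ b) :
    p ^ 3 ∣ N.choose a * M.choose b := by
  by_cases hpb : p ∣ b
  · have hpa : p.Coprime a := hp.coprime_iff_not_dvd.2 fun hpa ↦ hab (dvd_add hpa hpb)
    rw [pow_succ]
    exact mul_dvd_mul (dvd_choose_of_dvd_of_coprime hN (hpa.pow_left 2))
      (hp.dvd_choose_of_sq_dvd hM hb)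
  · rw [pow_succ']
    exact mul_dvd_mul (hp.dvd_choose_of_sq_dvd hN ha)
      (dvd_choose_of_dvd_of_coprime hM ((hp.coprime_iff_not_dvd.2 hpb).pow_left 2))

theorem cast_choose_sq_mul_choose_sub_eq_zero {N s b : ℕ} (hp : p.Prime) (hN : p ^ 2 ∣ N)
    (hs : ¬p ∣ s) (hbs : b ≤ s) (hb0 : b ≠ 0) (hbr : b ≠ s % p ^ 2) (hbp : b ≠ p ^ 2) :
    (((p ^ 2).choose b * N.choose (s - b) : ℕ) : ZMod (p ^ 3)) = 0 := by
  rw [ZMod.natCast_eq_zero_iff]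
  rcases lt_or_gt_of_ne hbp with hlt | hgt
  · refine hp.pow_three_dvd_choose_mul_choose dvd_rfl hN (by rwa [Nat.add_sub_cancel' hbs])
      (fun h ↦ hb0 (Nat.eq_zero_of_dvd_of_lt h hlt)) fun ⟨t, ht⟩ ↦ hbr ?_
    rw [← Nat.add_sub_cancel' hbs, ht, Nat.add_mul_mod_self_left, Nat.mod_eq_of_lt hlt]
  · simp [Nat.choose_eq_zero_of_lt hgt]

theorem cast_choose_add_sq_of_lt {N r : ℕ} (hp : p.Prime) (hN : p ^ 2 ∣ N) (hr : ¬p ∣ r)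
    (hrp : r < p ^ 2) :
    ((N + p ^ 2).choose r : ZMod (p ^ 3)) = N.choose r + (p ^ 2).choose r := by
  have hr0 : r ≠ 0 := by rintro rfl; exact hr (dvd_zero p)
  have hsub : ({0, r} : Finset ℕ) ⊆ range (r + 1) := by
    simp [insert_subset_iff]
  rw [add_comm, add_choose_eq, Finset.Nat.sum_antidiagonal_eq_sum_range_succ
    (fun i j ↦ (p ^ 2).choose i * N.choose j), cast_sum, ← sum_subset hsub, sum_pair hr0.symm]
  · simp
  · intro b hb hbT
    simp only [mem_range, mem_insert, mem_singleton, not_or] at hb hbT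
    exact hp.cast_choose_sq_mul_choose_sub_eq_zero hN hr (by omega) hbT.1
      (by rw [Nat.mod_eq_of_lt hrp]; exact hbT.2) (by omega)

theorem cast_choose_add_sq {N m r : ℕ} (hp : p.Prime) (hN : p ^ 2 ∣ N) (hr : ¬p ∣ r)
    (hrp : r < p ^ 2) :
    ((N + p ^ 2).choose ((m + 1) * p ^ 2 + r) : ZMod (p ^ 3)) =
      N.choose ((m + 1) * p ^ 2 + r) + (p ^ 2).choose r * N.choose ((m + 1) * p ^ 2) +
        N.choose (m * p ^ 2 + r) := by
  have hr0 : r ≠ 0 := by rintro rfl; exact hr (dvd_zero p)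
  have hp2 : p ^ 2 ≠ 0 := pow_ne_zero 2 hp.ne_zero
  have hs : ¬p ∣ (m + 1) * p ^ 2 + r := fun h ↦
    hr ((Nat.dvd_add_right (Dvd.intro_left _ (by ring : (m + 1) * p * p = _))).1 h)
  have hsr : ((m + 1) * p ^ 2 + r) % p ^ 2 = r := by
    rw [Nat.mul_add_mod_self_right, Nat.mod_eq_of_lt hrp]
  rw [add_one_mul] at hs hsr ⊢
  have hsub : ({0, r, p ^ 2} : Finset ℕ) ⊆ range (m * p ^ 2 + p ^ 2 + r + 1) := by
    simp only [insert_subset_iff, singleton_subset_iff, mem_range]; omega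
  rw [add_comm, add_choose_eq, Finset.Nat.sum_antidiagonal_eq_sum_range_succ
    (fun i j ↦ (p ^ 2).choose i * N.choose j), cast_sum, ← sum_subset hsub,
    sum_insert (by simp [hr0.symm, hp2.symm]), sum_pair hrp.ne]
  · rw [show m * p ^ 2 + p ^ 2 + r - r = m * p ^ 2 + p ^ 2 by omega,
      show m * p ^ 2 + p ^ 2 + r - p ^ 2 = m * p ^ 2 + r by omega]
    simp only [choose_zero_right, choose_self, Nat.sub_zero, cast_mul, one_mul]
    ring
  · intro b hb hbT
    simp only [mem_range, mem_insert, mem_singleton, not_or] at hb hbT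
    exact hp.cast_choose_sq_mul_choose_sub_eq_zero hN hs (by omega) hbT.1
      (by rw [hsr]; exact hbT.2.1) hbT.2.2

theorem cast_choose_sq_mul_choose_mul_sq {r : ℕ} (hp : p.Prime) (hr : ¬p ∣ r) (n m : ℕ) :
    ((p ^ 2).choose r * (n * p ^ 2).choose (m * p ^ 2) : ZMod (p ^ 3)) =
      (p ^ 2).choose r * n.choose m := by
  have : Fact p.Prime := ⟨hp⟩
  have hlucas : (n * p ^ 2).choose (m * p ^ 2) ≡ n.choose m [MOD p] := by
    rw [mul_comm n, mul_comm m]; exact Choose.choose_pow_mul_pow_mul_modEq_choose_nat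
  have hc : p ^ 2 * p ∣ (p ^ 2).choose r * p :=
    mul_dvd_mul_right (dvd_choose_of_dvd_of_coprime dvd_rfl
      ((hp.coprime_iff_not_dvd.2 hr).pow_left 2)) p
  exact_mod_cast (ZMod.natCast_eq_natCast_iff _ _ _).2
    ((hlucas.mul_left' ((p ^ 2).choose r)).of_dvd (by rwa [← pow_succ] at hc))

theorem cast_choose_mul_sq_add {r : ℕ} (hp : p.Prime) (hr : ¬p ∣ r) (hrp : r < p ^ 2)
    (n m : ℕ) :
    ((n * p ^ 2).choose (m * p ^ 2 + r) : ZMod (p ^ 3)) =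
      (m + 1) * n.choose (m + 1) * (p ^ 2).choose r := by
  induction n generalizing m with
  | zero =>
    have hr0 : 0 < r := Nat.pos_of_ne_zero (by rintro rfl; exact hr (dvd_zero p))
    simp [choose_eq_zero_of_lt (Nat.add_pos_right _ hr0)]
  | succ n ih =>
    have hN : p ^ 2 ∣ n * p ^ 2 := dvd_mul_left _ _
    rw [add_one_mul n]
    cases m with
    | zero =>
      have ih0 := ih 0
      simp only [zero_mul, zero_add, cast_zero, choose_one_right] at ih0 ⊢
      rw [hp.cast_choose_add_sq_of_lt hN hr hrp, ih0]
      push_cast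
      ring
    | succ m =>
      rw [hp.cast_choose_add_sq hN hr hrp, ih, ih, hp.cast_choose_sq_mul_choose_mul_sq hr,
        choose_succ_succ' n (m + 1)]
      push_cast
      ring

end Prime
end Nat

theorem stmt4_general (p n m k i : ℕ) (hp : p.Prime)
    (hk : k ≤ p - 1) (hi1 : 1 ≤ i) (hi2 : i ≤ p - 1) :
    (((n * p ^ 2).choose (m * p ^ 2 + k * p + i) : ℤ)) ≡
      (m + 1) * (n.choose (m + 1)) * ((p ^ 2).choose (k * p + i))
      [ZMOD ((p : ℤ) ^ 3)] := by
  have hip : i < p := by omega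
  have hr : ¬p ∣ k * p + i := fun h ↦
    Nat.not_dvd_of_pos_of_lt hi1 hip ((Nat.dvd_add_right (dvd_mul_left p k)).1 h)
  have hrp : k * p + i < p ^ 2 := by
    calc k * p + i < (k + 1) * p := by rw [add_one_mul]; omega
      _ ≤ p * p := Nat.mul_le_mul_right p (by omega)
      _ = p ^ 2 := (sq p).symm
  have h := hp.cast_choose_mul_sq_add hr hrp n m
  rw [add_assoc, show (p : ℤ) ^ 3 = ((p ^ 3 : ℕ) : ℤ) by push_cast; rfl,
    ← ZMod.intCast_eq_intCast_iff]
  exact_mod_cast h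

theorem stmt4 (p n m k i : ℕ) (hp : p.Prime) (hp5 : 5 ≤ p) (hmn : m ≤ n)
    (hk : k ≤ p - 1) (hi1 : 1 ≤ i) (hi2 : i ≤ p - 1) :
    (((n * p ^ 2).choose (m * p ^ 2 + k * p + i) : ℤ)) ≡
      (m + 1) * (n.choose (m + 1)) * ((p ^ 2).choose (k * p + i))
      [ZMOD ((p : ℤ) ^ 3)] :=
  stmt4_general p n m k i hp hk hi1 hi2
end

section
/- Let p be a prime, s ≥ 1, and n, m nonnegative integers with n ≥ m + 1 and m ≥ 1. Then C(n·p^s, m·p^s + 1) ≡ (m+1) · C(n, m+1) · p^s (mod p^(s+1)). -/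
theorem lucas_pow_aux (p : ℕ) (hp : p.Prime) (s n m : ℕ) :
    (n * p ^ s).choose (m * p ^ s) ≡ n.choose m [MOD p] := by
  haveI : Fact p.Prime := ⟨hp⟩
  induction s with
  | zero => simpa using Nat.ModEq.refl (n.choose m)
  | succ s ih =>
    have h := @Choose.choose_modEq_choose_mod_mul_choose_div_nat
      (n * p ^ (s + 1)) (m * p ^ (s + 1)) p _
    have hp0 : 0 < p := hp.pos
    rw [pow_succ, ← mul_assoc, ← mul_assoc, Nat.mul_mod_left, Nat.mul_mod_left,
      Nat.mul_div_cancel _ hp0, Nat.mul_div_cancel _ hp0] at h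
    simp only [Nat.choose_self, one_mul] at h
    rw [pow_succ, ← mul_assoc, ← mul_assoc]
    exact h.trans ih

theorem stmt10 (p s n m : ℕ) (hp : p.Prime) (hs : 1 ≤ s)
    (hm : 1 ≤ m) (hnm : m + 1 ≤ n) :
    (((n * p ^ s).choose (m * p ^ s + 1) : ℤ)) ≡
      (m + 1) * (n.choose (m + 1)) * (p : ℤ) ^ s [ZMOD ((p : ℤ) ^ (s + 1))] := by
  have hp0 : 0 < p := hp.pos
  have hmn : m ≤ n := le_trans (Nat.le_succ m) hnm
  -- p divides m * p ^ s since s ≥ 1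
  have hpK : (p : ℕ) ∣ m * p ^ s := Dvd.dvd.mul_left (dvd_pow_self p (Nat.one_le_iff_ne_zero.mp hs)) m
  -- coprimality of K+1 with p
  have hcop : Nat.Coprime p (m * p ^ s + 1) := by
    rw [Nat.Prime.coprime_iff_not_dvd hp]
    intro hdvd
    have : p ∣ 1 := (Nat.dvd_add_right hpK).mp hdvd
    exact Nat.Prime.one_lt hp |>.ne' (Nat.le_antisymm (Nat.le_of_dvd one_pos this) hp.one_lt.le ▸ rfl)
  -- key nat identity: C(N, K+1) * (K+1) = C(N, K) * (N - K)
  have hkey : (n * p ^ s).choose (m * p ^ s + 1) * (m * p ^ s + 1)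
      = (n * p ^ s).choose (m * p ^ s) * ((n - m) * p ^ s) := by
    rw [Nat.choose_succ_right_eq, Nat.sub_mul]
  -- integer identity: (n - m) * C(n, m) = (m+1) * C(n, m+1)
  have hid : ((n : ℤ) - m) * n.choose m = (m + 1) * n.choose (m + 1) := by
    have := Nat.choose_succ_right_eq n m
    have hcast : (n.choose (m + 1) : ℤ) * (m + 1) = n.choose m * ((n : ℤ) - m) := by
      rw [← Nat.cast_sub hmn]
      exact_mod_cast this
    linarith [hcast]
  -- mod p congruence
  have hlucas : ((n * p ^ s).choose (m * p ^ s) : ℤ) ≡ (n.choose m : ℤ) [ZMOD (p : ℤ)] := by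
    exact_mod_cast (Int.natCast_modEq_iff.mpr (lucas_pow_aux p hp s n m))
  have hone : ((m * p ^ s + 1 : ℕ) : ℤ) ≡ 1 [ZMOD (p : ℤ)] := by
    have : ((m * p ^ s : ℕ) : ℤ) ≡ 0 [ZMOD (p : ℤ)] :=
      (Int.modEq_zero_iff_dvd).mpr (Int.natCast_dvd_natCast.mpr hpK)
    calc ((m * p ^ s + 1 : ℕ) : ℤ) = ((m * p ^ s : ℕ) : ℤ) + 1 := by push_cast; ring
    _ ≡ 0 + 1 [ZMOD (p : ℤ)] := this.add_right 1
    _ = 1 := by ring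
  have hmodp : ((n : ℤ) - m) * ((n * p ^ s).choose (m * p ^ s)) ≡
      ((m * p ^ s + 1 : ℕ) : ℤ) * ((m + 1) * n.choose (m + 1)) [ZMOD (p : ℤ)] := by
    calc ((n : ℤ) - m) * ((n * p ^ s).choose (m * p ^ s))
        ≡ ((n : ℤ) - m) * (n.choose m) [ZMOD (p : ℤ)] := hlucas.mul_left _
      _ = 1 * ((m + 1) * n.choose (m + 1)) := by rw [hid]; ring
      _ ≡ ((m * p ^ s + 1 : ℕ) : ℤ) * ((m + 1) * n.choose (m + 1)) [ZMOD (p : ℤ)] :=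
        (hone.symm).mul_right _
  -- multiply by p^s to get mod p^(s+1)
  have hmul := hmodp.mul_right' (c := (p : ℤ) ^ s)
  rw [show (p : ℤ) * (p : ℤ) ^ s = (p : ℤ) ^ (s + 1) by ring] at hmul
  -- rewrite LHS using key identity
  have hlhs : ((n : ℤ) - m) * ((n * p ^ s).choose (m * p ^ s)) * (p : ℤ) ^ s
      = ((m * p ^ s + 1 : ℕ) : ℤ) * ((n * p ^ s).choose (m * p ^ s + 1)) := by
    have := congrArg (Nat.cast : ℕ → ℤ) hkey
    push_cast [Nat.cast_sub hmn] at this ⊢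
    linarith [this]
  rw [hlhs, mul_assoc (((m * p ^ s + 1 : ℕ) : ℤ))] at hmul
  -- cancel (m * p^s + 1)
  have hpos : (0 : ℤ) < (p : ℤ) ^ (s + 1) := by positivity
  have hcan := Int.ModEq.cancel_left_div_gcd hpos hmul
  have hgcd : Int.gcd ((p : ℤ) ^ (s + 1)) ((m * p ^ s + 1 : ℕ) : ℤ) = 1 := by
    have : ((p : ℤ) ^ (s + 1)) = ((p ^ (s + 1) : ℕ) : ℤ) := by push_cast; ring
    rw [this, Int.gcd_natCast_natCast]
    exact Nat.Coprime.pow_left _ hcop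
  rw [hgcd] at hcan
  simpa using hcan
end

section
/- Let p be a prime, let n, m, s, k, i be nonnegative integers with n ≥ m, s ≥ 1, 0 ≤ k ≤ p^(s−1) − 1 and 1 ≤ i ≤ p−2. If C(n·p^s, m·p^s + k·p + i) · (k·p + i) ≡ (−1)^(k·p+i−1) · (m+1) · C(n, m+1) · p^s (mod p^(s+1)), then C(n·p^s, m·p^s + k·p + i + 1) · (k·p + i + 1) ≡ (−1)^(k·p+i) · (m+1) · C(n, m+1) · p^s (mod p^(s+1)). -/
/-!
Put `N = n p^s` and `j = m p^s + k p + i`, and use Pascal's rule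
`C(N, j+1) (j+1) = C(N, j) (N - j)`. As `k p + i` is prime to `p`, the hypothesis forces
`p^s ∣ C(N, j)`; so the multiples of `p^s` in `N - j` contribute multiples of `p^(2s)` and may be
dropped modulo `p^(s+1)`, giving `C(N, j+1) (j+1) ≡ -C(N, j) (k p + i)`. Since `i + 1 < p`, also
`j + 1` is prime to `p`, hence `p^s ∣ C(N, j+1)` as well, and the term `m p^s` of `j + 1` may be
dropped in the same way.
-/

theorem Nat.cast_choose_succ_mul {R : Type*} [Ring R] (N j : ℕ) :
    (N.choose (j + 1) : R) * (j + 1) = N.choose j * (N - j) := by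
  rcases le_or_gt j N with h | h
  · simpa [h] using congrArg (Nat.cast : ℕ → R) (Nat.choose_succ_right_eq N j)
  · simp [Nat.choose_eq_zero_of_lt h, Nat.choose_eq_zero_of_lt (Nat.lt_succ_of_lt h)]

theorem Int.isCoprime_mul_add_of_lt {p : ℕ} (hp : p.Prime) (a : ℤ) {i : ℕ} (h0 : 0 < i)
    (hi : i < p) : IsCoprime (p : ℤ) (a * p + i) := by
  refine (Nat.prime_iff_prime_int.mp hp).coprime_iff_not_dvd.mpr ?_
  rw [dvd_add_right (dvd_mul_left _ _)]
  exact_mod_cast Nat.not_dvd_of_pos_of_lt h0 hi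

theorem Int.dvd_of_mul_modEq_of_isCoprime {d n a b x : ℤ} (hdn : d ∣ n) (hdb : d ∣ b)
    (hda : IsCoprime d a) (h : x * a ≡ b [ZMOD n]) : d ∣ x :=
  hda.dvd_of_dvd_mul_right <| (dvd_sub_right hdb).mp (hdn.trans h.dvd)

theorem Int.mul_add_modEq_of_pow_dvd {p x c r : ℤ} {s : ℕ} (hs : 1 ≤ s) (hx : p ^ s ∣ x) :
    x * (c * p ^ s + r) ≡ x * r [ZMOD p ^ (s + 1)] := by
  refine Int.modEq_iff_dvd.mpr ?_
  have hsq : p ^ (s + 1) ∣ p ^ s * p ^ s := by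
    rw [← pow_add]; exact pow_dvd_pow p (by omega)
  have : x * r - x * (c * p ^ s + r) = -c * (x * p ^ s) := by ring
  rw [this]
  exact (hsq.trans (mul_dvd_mul_right hx _)).mul_left _

theorem stmt11_general (p n m s k i : ℕ) (hp : p.Prime) (hs : 1 ≤ s)
    (hi1 : 1 ≤ i) (hi2 : i ≤ p - 2)
    (hind : (((n * p ^ s).choose (m * p ^ s + k * p + i) : ℤ)) * (k * p + i) ≡
      (-1) ^ (k * p + i - 1) * (m + 1) * (n.choose (m + 1)) * (p : ℤ) ^ s
      [ZMOD ((p : ℤ) ^ (s + 1))]) :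
    (((n * p ^ s).choose (m * p ^ s + k * p + i + 1) : ℤ)) * (k * p + i + 1) ≡
      (-1) ^ (k * p + i) * (m + 1) * (n.choose (m + 1)) * (p : ℤ) ^ s
      [ZMOD ((p : ℤ) ^ (s + 1))] := by
  set C₀ : ℤ := ↑((n * p ^ s).choose (m * p ^ s + k * p + i))
  set C₁ : ℤ := ↑((n * p ^ s).choose (m * p ^ s + k * p + i + 1))
  have hmod : (p : ℤ) ^ s ∣ (p : ℤ) ^ (s + 1) := pow_dvd_pow _ s.le_succ
  have hC₀ : (p : ℤ) ^ s ∣ C₀ :=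
    Int.dvd_of_mul_modEq_of_isCoprime hmod (dvd_mul_left _ _)
      (Int.isCoprime_mul_add_of_lt hp k hi1 (by omega)).pow_left hind
  have hpascal : C₁ * (m * p ^ s + (k * p + i + 1)) = C₀ * ((n - m) * p ^ s + -(k * p + i)) := by
    have := Nat.cast_choose_succ_mul (R := ℤ) (n * p ^ s) (m * p ^ s + k * p + i)
    push_cast at this
    linear_combination this
  have hsucc : C₁ * (m * p ^ s + (k * p + i + 1)) ≡
      (-1) ^ (k * p + i) * (m + 1) * (n.choose (m + 1)) * (p : ℤ) ^ s [ZMOD ((p : ℤ) ^ (s + 1))] := by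
    obtain ⟨e, he⟩ : ∃ e, k * p + i = e + 1 := ⟨k * p + i - 1, by omega⟩
    calc _ = _ := hpascal
      _ ≡ -(C₀ * (k * p + i)) [ZMOD ((p : ℤ) ^ (s + 1))] := by
        rw [← mul_neg]; exact Int.mul_add_modEq_of_pow_dvd hs hC₀
      _ ≡ -((-1) ^ (k * p + i - 1) * (m + 1) * (n.choose (m + 1)) * (p : ℤ) ^ s)
          [ZMOD ((p : ℤ) ^ (s + 1))] := hind.neg
      _ = _ := by rw [he, Nat.add_sub_cancel, pow_succ]; ring
  have hcop : IsCoprime (p : ℤ) (m * p ^ s + (k * p + i + 1)) := by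
    convert Int.isCoprime_mul_add_of_lt hp (m * p ^ (s - 1) + k) (i := i + 1) (by omega) (by omega)
      using 1
    rw [add_mul, mul_assoc, ← pow_succ, Nat.sub_add_cancel hs]
    push_cast; ring
  have hC₁ : (p : ℤ) ^ s ∣ C₁ :=
    Int.dvd_of_mul_modEq_of_isCoprime hmod (dvd_mul_left _ _) hcop.pow_left hsucc
  exact (Int.mul_add_modEq_of_pow_dvd hs hC₁).symm.trans hsucc

theorem stmt11 (p n m s k i : ℕ) (hp : p.Prime) (hmn : m ≤ n) (hs : 1 ≤ s)
    (hk : k ≤ p ^ (s - 1) - 1) (hi1 : 1 ≤ i) (hi2 : i ≤ p - 2)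
    (hind : (((n * p ^ s).choose (m * p ^ s + k * p + i) : ℤ)) * (k * p + i) ≡
      (-1) ^ (k * p + i - 1) * (m + 1) * (n.choose (m + 1)) * (p : ℤ) ^ s
      [ZMOD ((p : ℤ) ^ (s + 1))]) :
    (((n * p ^ s).choose (m * p ^ s + k * p + i + 1) : ℤ)) * (k * p + i + 1) ≡
      (-1) ^ (k * p + i) * (m + 1) * (n.choose (m + 1)) * (p : ℤ) ^ s
      [ZMOD ((p : ℤ) ^ (s + 1))] :=
  stmt11_general p n m s k i hp hs hi1 hi2 hind
end

section
/- Let p be an odd prime, s ≥ 2, and let n, m be nonnegative integers with n ≥ m + 1. Let l, u be integers with 0 ≤ l ≤ s − 2, u ≥ 1, p ∤ u, u < p^(s−1−l). Then C(n·p^s, m·p^s + u·p^(l+1) + 1) ≡ (−1)^u · (m+1) · C(n, m+1) · p^s (mod p^(s+1)). -/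
/-!
Write `N = n p^s`, `a = m p^s`, `c = n - m` and `K = u p^(l+1)`. Combining
`C(N, a+K+1) C(a+K+1, a) = C(N, a) C(N-a, K+1)` with `j C(M, j) = M C(M-1, j-1)` gives
  `C(N, a+K+1) · (a+K+1) C(a+K, K) = p^s · C(N, a) · c · C(c p^s - 1, K)`.
Since `p ∣ C(c p^s, j)` for `0 < j < p^s`, Pascal's rule gives `C(c p^s - 1, K) ≡ (-1)^K` and
Vandermonde gives `C(a+K, K) ≡ 1` modulo `p`; Lucas gives `C(N, a) ≡ C(n, m)`, and `a+K+1 ≡ 1`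
because `p ∣ K`. The cofactor on the left is thus `≡ 1 mod p`, so modulo `p^(s+1)` the binomial
is `p^s (-1)^K C(n, m) c = p^s (-1)^K (m+1) C(n, m+1)`, and `(-1)^K = (-1)^u` as `p` is odd.
-/

theorem Int.modEq_pow_mul_of_mul_eq {p x u r t : ℤ} {s : ℕ} (hp : Prime p)
    (h : x * u = p ^ s * r) (hu : u ≡ 1 [ZMOD p]) (hr : r ≡ t [ZMOD p]) :
    x ≡ t * p ^ s [ZMOD p ^ (s + 1)] := by
  have hpu : ¬ p ∣ u := fun hd => hp.not_dvd_one (by simpa using dvd_add hu.dvd hd)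
  obtain ⟨y, rfl⟩ : p ^ s ∣ x := hp.pow_dvd_of_dvd_mul_right s hpu ⟨r, h⟩
  have hyu : y * u = r := mul_left_cancel₀ (pow_ne_zero s hp.ne_zero) (by rw [← h]; ring)
  have hy : y ≡ t [ZMOD p] :=
    calc y = y * 1 := (mul_one y).symm
      _ ≡ y * u [ZMOD p] := hu.symm.mul_left y
      _ = r := hyu
      _ ≡ t [ZMOD p] := hr
  rw [pow_succ, mul_comm t]
  exact hy.mul_left'

namespace Nat

theorem Prime.dvd_choose_mul_pow {p s c j : ℕ} (hp : p.Prime) (hj0 : j ≠ 0)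
    (hj : j < p ^ s) : p ∣ (c * p ^ s).choose j := by
  obtain ⟨i, rfl⟩ := Nat.exists_eq_succ_of_ne_zero hj0
  rcases Nat.eq_zero_or_pos c with rfl | hc
  · simp
  by_contra h
  have hM : c * p ^ s - 1 + 1 = c * p ^ s := Nat.sub_add_cancel (Nat.one_le_iff_ne_zero.2
    (Nat.mul_ne_zero hc.ne' (pow_ne_zero s hp.ne_zero)))
  have hmul : (c * p ^ s).choose (i + 1) * (i + 1) = p ^ s * (c * (c * p ^ s - 1).choose i) := by
    rw [← hM, ← Nat.add_one_mul_choose_eq, hM]; ring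
  have hdvd : p ^ s ∣ i + 1 :=
    ((Nat.Coprime.pow_left s (hp.coprime_iff_not_dvd.2 h)).dvd_of_dvd_mul_left
      ⟨_, hmul⟩)
  exact absurd (Nat.le_of_dvd i.succ_pos hdvd) (not_le.2 hj)

theorem choose_mul_pow_sub_one_modEq_neg_one_pow {p s c K : ℕ} (hp : p.Prime) (hc : c ≠ 0)
    (hK : K < p ^ s) : ((c * p ^ s - 1).choose K : ℤ) ≡ (-1) ^ K [ZMOD p] := by
  induction K with
  | zero => simp [Int.ModEq.refl]
  | succ K ih =>
    have hM : c * p ^ s - 1 + 1 = c * p ^ s := Nat.sub_add_cancel (Nat.one_le_iff_ne_zero.2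
      (Nat.mul_ne_zero hc (pow_ne_zero s hp.ne_zero)))
    have hpascal : ((c * p ^ s - 1).choose (K + 1) : ℤ) =
        (c * p ^ s).choose (K + 1) - (c * p ^ s - 1).choose K := by
      rw [← hM, Nat.choose_succ_succ', hM]; push_cast; ring
    have hzero : ((c * p ^ s).choose (K + 1) : ℤ) ≡ 0 [ZMOD p] :=
      Int.modEq_zero_iff_dvd.2 (Int.natCast_dvd_natCast.2
        (hp.dvd_choose_mul_pow K.succ_ne_zero hK))
    rw [hpascal, pow_succ, mul_neg_one, ← zero_sub]
    exact hzero.sub (ih (K.lt_succ_self.trans hK))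

open Finset in
theorem choose_mul_pow_add_self_modEq_one {p s a K : ℕ} (hp : p.Prime) (hK : K < p ^ s) :
    ((a * p ^ s + K).choose K : ℤ) ≡ 1 [ZMOD p] := by
  have hmem : ((0, K) : ℕ × ℕ) ∈ antidiagonal K := by simp
  have hrest : p ∣ ∑ ij ∈ (antidiagonal K).erase (0, K),
      (a * p ^ s).choose ij.1 * K.choose ij.2 := by
    refine Finset.dvd_sum fun ij hij => Dvd.dvd.mul_right (hp.dvd_choose_mul_pow ?_ ?_) _
    all_goals
      obtain ⟨hne, hsum⟩ := mem_erase.1 hij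
      rw [HasAntidiagonal.mem_antidiagonal] at hsum
    · exact fun h0 => hne (Prod.ext h0 (by dsimp only; omega))
    · omega
  rw [Nat.add_choose_eq, ← Finset.add_sum_erase _ _ hmem]
  simpa using (Int.ModEq.add_left 1 (Int.modEq_zero_iff_dvd.2 (Int.natCast_dvd_natCast.2 hrest)))

theorem choose_add_succ_mul_eq (a M K : ℕ) :
    (a + M + 1).choose (a + K + 1) * ((a + K + 1) * (a + K).choose K) =
      (a + M + 1).choose a * ((M + 1) * M.choose K) := by
  have hsymm : (a + K + 1) * (a + K).choose K = (a + (K + 1)).choose a * (K + 1) := by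
    rw [Nat.add_one_mul_choose_eq, Nat.choose_symm_add]; rfl
  have hmul : (a + M + 1).choose (a + (K + 1)) * (a + (K + 1)).choose a =
      (a + M + 1).choose a * (M + 1).choose (K + 1) := by
    rw [Nat.choose_mul (Nat.le_add_right a _)]; congr 2 <;> omega
  calc (a + M + 1).choose (a + K + 1) * ((a + K + 1) * (a + K).choose K)
      = (a + M + 1).choose (a + (K + 1)) * (a + (K + 1)).choose a * (K + 1) := by
        rw [hsymm, mul_assoc]; rfl
    _ = (a + M + 1).choose a * ((M + 1).choose (K + 1) * (K + 1)) := by rw [hmul, mul_assoc]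
    _ = (a + M + 1).choose a * ((M + 1) * M.choose K) := by rw [Nat.add_one_mul_choose_eq]

theorem choose_mul_pow_add_succ_modEq {p s n m K : ℕ} (hp : p.Prime) (hs : s ≠ 0) (hmn : m < n)
    (hK : K < p ^ s) (hpK : p ∣ K) :
    ((n * p ^ s).choose (m * p ^ s + K + 1) : ℤ) ≡
      (-1) ^ K * (m + 1) * n.choose (m + 1) * p ^ s [ZMOD p ^ (s + 1)] := by
  have hprod : ((n * p ^ s).choose (m * p ^ s + K + 1) : ℤ) *
        (((m * p ^ s + K + 1 : ℕ) : ℤ) * (m * p ^ s + K).choose K) =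
      p ^ s * ((n * p ^ s).choose (m * p ^ s) * (n - m : ℕ) *
        ((n - m) * p ^ s - 1).choose K) := by
    have hcpos : 0 < (n - m) * p ^ s := Nat.mul_pos (Nat.sub_pos_of_lt hmn) (pow_pos hp.pos s)
    have hN : m * p ^ s + ((n - m) * p ^ s - 1) + 1 = n * p ^ s := by
      have : (n - m) * p ^ s + m * p ^ s = n * p ^ s := by
        rw [← add_mul, Nat.sub_add_cancel hmn.le]
      omega
    have hid := Nat.choose_add_succ_mul_eq (m * p ^ s) ((n - m) * p ^ s - 1) K
    rw [hN, Nat.sub_add_cancel hcpos] at hid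
    have := congrArg (Nat.cast : ℕ → ℤ) hid
    push_cast at this ⊢
    linear_combination this
  have hunit : ((m * p ^ s + K + 1 : ℕ) : ℤ) * (m * p ^ s + K).choose K ≡ 1 [ZMOD p] := by
    have hdvd : p ∣ m * p ^ s + K := dvd_add (Dvd.dvd.mul_left (dvd_pow_self p hs) m) hpK
    have hE : ((m * p ^ s + K + 1 : ℕ) : ℤ) ≡ 1 [ZMOD p] := by
      simpa using (Int.modEq_zero_iff_dvd.2 (Int.natCast_dvd_natCast.2 hdvd)).add_right 1
    simpa using hE.mul (choose_mul_pow_add_self_modEq_one hp hK)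
  have hlucas : ((n * p ^ s).choose (m * p ^ s) : ℤ) ≡ n.choose m [ZMOD p] := by
    have := Fact.mk hp
    have := Choose.choose_pow_mul_pow_mul_modEq_choose (p := p) (k := s) (a := n) (b := m)
    rwa [mul_comm (p ^ s) n, mul_comm (p ^ s) m] at this
  have hpascal : (n.choose m : ℤ) * (n - m : ℕ) = (m + 1) * n.choose (m + 1) := by
    exact_mod_cast (Nat.choose_succ_right_eq n m).symm.trans (mul_comm _ _)
  refine Int.modEq_pow_mul_of_mul_eq (Nat.prime_iff_prime_int.mp hp) hprod hunit ?_
  calc ((n * p ^ s).choose (m * p ^ s) : ℤ) * (n - m : ℕ) * ((n - m) * p ^ s - 1).choose K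
      ≡ n.choose m * (n - m : ℕ) * (-1) ^ K [ZMOD p] :=
        (hlucas.mul_right _).mul (choose_mul_pow_sub_one_modEq_neg_one_pow hp
          (Nat.sub_ne_zero_of_lt hmn) hK)
    _ = (-1) ^ K * (m + 1) * n.choose (m + 1) := by rw [hpascal]; ring

end Nat

theorem stmt13_general (p s n m l u : ℕ) (hp : p.Prime) (hodd : Odd p) (hs : 2 ≤ s)
    (hnm : m + 1 ≤ n) (hl : l ≤ s - 2)
    (hu2 : u < p ^ (s - 1 - l)) :
    (((n * p ^ s).choose (m * p ^ s + u * p ^ (l + 1) + 1) : ℤ)) ≡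
      (-1) ^ u * (m + 1) * (n.choose (m + 1)) * (p : ℤ) ^ s
      [ZMOD ((p : ℤ) ^ (s + 1))] := by
  have hK : u * p ^ (l + 1) < p ^ s :=
    calc u * p ^ (l + 1) < p ^ (s - 1 - l) * p ^ (l + 1) :=
          Nat.mul_lt_mul_of_pos_right hu2 (pow_pos hp.pos _)
      _ = p ^ s := by rw [← pow_add]; congr 1; omega
  have hpK : p ∣ u * p ^ (l + 1) := Dvd.dvd.mul_left (dvd_pow_self p l.succ_ne_zero) u
  have hsign : (-1 : ℤ) ^ (u * p ^ (l + 1)) = (-1) ^ u := by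
    rw [mul_comm, pow_mul, hodd.pow.neg_one_pow]
  simpa only [hsign] using Nat.choose_mul_pow_add_succ_modEq hp (by omega) hnm hK hpK

theorem stmt13 (p s n m l u : ℕ) (hp : p.Prime) (hodd : Odd p) (hs : 2 ≤ s)
    (hnm : m + 1 ≤ n) (hl : l ≤ s - 2) (hu1 : 1 ≤ u) (hpu : ¬ p ∣ u)
    (hu2 : u < p ^ (s - 1 - l)) :
    (((n * p ^ s).choose (m * p ^ s + u * p ^ (l + 1) + 1) : ℤ)) ≡
      (-1) ^ u * (m + 1) * (n.choose (m + 1)) * (p : ℤ) ^ s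
      [ZMOD ((p : ℤ) ^ (s + 1))] :=
  stmt13_general p s n m l u hp hodd hs hnm hl hu2
end

section
/- Let p be a prime, s ≥ 1, and let n, m be nonnegative integers with n ≥ m, and r an integer with 1 ≤ r ≤ p^s − 1 and p ∤ r. Then p^s divides C(n·p^s, m·p^s + r). -/
/-! From `k * C(N, k) = N * C(N - 1, k - 1)`, a divisor of `N` coprime to `k ≠ 0` divides `C(N, k)`.
Here `p ^ s` divides `N = n p ^ s` and is coprime to `k = m p ^ s + r` because `p ∤ r`. -/

theorem Nat.Coprime.dvd_choose_of_dvd {a N k : ℕ} (hak : a.Coprime k) (hk : k ≠ 0)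
    (haN : a ∣ N) : a ∣ N.choose k := by
  obtain ⟨j, rfl⟩ := Nat.exists_eq_succ_of_ne_zero hk
  rcases N with _ | M
  · simp
  · refine hak.dvd_of_dvd_mul_right ?_
    rw [← Nat.add_one_mul_choose_eq]
    exact haN.mul_right _

theorem stmt15_general (p s n m r : ℕ) (hp : p.Prime) (hpr : ¬ p ∣ r) :
    p ^ s ∣ (n * p ^ s).choose (m * p ^ s + r) := by
  have hcop : (p ^ s).Coprime (m * p ^ s + r) :=
    (Nat.coprime_mul_right_add_right _ _ _).2 (((hp.coprime_iff_not_dvd).2 hpr).pow_left s)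
  have hk : m * p ^ s + r ≠ 0 := by
    intro h
    exact hpr (Nat.eq_zero_of_add_eq_zero_left h ▸ dvd_zero p)
  exact hcop.dvd_choose_of_dvd hk (dvd_mul_left _ _)

theorem stmt15 (p s n m r : ℕ) (hp : p.Prime) (hs : 1 ≤ s) (hmn : m ≤ n)
    (hr1 : 1 ≤ r) (hr2 : r ≤ p ^ s - 1) (hpr : ¬ p ∣ r) :
    p ^ s ∣ (n * p ^ s).choose (m * p ^ s + r) :=
  stmt15_general p s n m r hp hpr
end

section
/- Let p be a prime, s ≥ 1, and let n, m be nonnegative integers with n ≥ m, and r an integer with 1 ≤ r ≤ p^s − 1 and p ∤ r. If additionally n ≥ m + 1, then C(n·p^s, m·p^s + r) / p^s ≡ (−1)^(r−1) · r⁻¹ · (m+1) · C(n, m+1) (mod p), where the left side is an integer. -/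
/-! For `N = n p^s` and `K = m p^s + r`, absorption gives `N C(N-1, K-1) = K C(N, K)`; as `K` is
prime to `p`, `p^s` divides `C(N, K)`, and cancelling it shows that the quotient times `r` is
`n C(N-1, K-1)` mod `p`. Since `N - 1 = (n-1) p^s + (p^s - 1)` and `K - 1 = m p^s + (r - 1)`,
Lucas' theorem in base `p^s` factors this binomial as `C(n-1, m) C(p^s - 1, r - 1)`, and
`C(p^s - 1, a) ≡ (-1)^a` because `p` divides every `C(p^s, a)` with `0 < a < p^s`. Finally
`n C(n-1, m) = (m+1) C(n, m+1)`. -/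

theorem Nat.mul_choose_sub_one_sub_one (N K : ℕ) (hK : K ≠ 0) :
    N * (N - 1).choose (K - 1) = N.choose K * K := by
  obtain ⟨K, rfl⟩ := Nat.exists_eq_succ_of_ne_zero hK
  cases N with
  | zero => simp
  | succ N => exact Nat.add_one_mul_choose_eq N K

theorem Nat.dvd_choose_of_dvd_of_coprime_s17 {a N K : ℕ} (hN : a ∣ N) (hK : a.Coprime K)
    (hK0 : K ≠ 0) : a ∣ N.choose K :=
  hK.dvd_of_dvd_mul_right <| Nat.mul_choose_sub_one_sub_one N K hK0 ▸ hN.mul_right _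

section ChooseModPrime

variable {p : ℕ} [hp : Fact p.Prime]

theorem natCast_choose_mul_pow_add_mul_pow_add (s A B : ℕ) {c d : ℕ} (hc : c < p ^ s)
    (hd : d < p ^ s) :
    ((A * p ^ s + c).choose (B * p ^ s + d) : ZMod p) = A.choose B * c.choose d := by
  have lucas (n k : ℕ) :
      (n.choose k : ZMod p) = (n % p).choose (k % p) * (n / p).choose (k / p) :=
    mod_cast (ZMod.natCast_eq_natCast_iff _ _ _).mpr
      Choose.choose_modEq_choose_mod_mul_choose_div_nat
  induction s generalizing c d with
  | zero =>
    obtain rfl : c = 0 := by simpa using hc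
    obtain rfl : d = 0 := by simpa using hd
    simp
  | succ s ih =>
    have hp0 := hp.out.pos
    have split (X x : ℕ) : (X * p ^ (s + 1) + x) % p = x % p ∧
        (X * p ^ (s + 1) + x) / p = X * p ^ s + x / p := by
      rw [pow_succ, ← mul_assoc, add_comm, Nat.add_mul_mod_self_right,
        Nat.add_mul_div_right _ _ hp0, add_comm]
      exact ⟨rfl, rfl⟩
    rw [lucas, (split A c).1, (split A c).2, (split B d).1, (split B d).2,
      ih (Nat.div_lt_of_lt_mul (by rwa [← pow_succ']))
        (Nat.div_lt_of_lt_mul (by rwa [← pow_succ'])), lucas c d]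
    ring

theorem natCast_choose_pow_sub_one (s : ℕ) {a : ℕ} (ha : a < p ^ s) :
    ((p ^ s - 1).choose a : ZMod p) = (-1) ^ a := by
  induction a with
  | zero => simp
  | succ a ih =>
    have pascal :
        (p ^ s - 1).choose a + (p ^ s - 1).choose (a + 1) = (p ^ s).choose (a + 1) := by
      conv_rhs => rw [← Nat.sub_add_cancel (show 1 ≤ p ^ s by omega)]
      rw [Nat.choose_succ_succ]
    have hvanish : ((p ^ s).choose (a + 1) : ZMod p) = 0 :=
      (ZMod.natCast_eq_zero_iff _ _).mpr (hp.out.dvd_choose_pow a.succ_ne_zero ha.ne)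
    rw [← pascal, Nat.cast_add, ih (by omega)] at hvanish
    rw [pow_succ]
    linear_combination hvanish

theorem natCast_mul_choose_mul_pow_sub_one (s n m : ℕ) {d : ℕ} (hd : d < p ^ s) :
    (n : ZMod p) * (n * p ^ s - 1).choose (m * p ^ s + d) =
      (-1) ^ d * (m + 1) * n.choose (m + 1) := by
  cases n with
  | zero => simp
  | succ n =>
    have hsplit : (n + 1) * p ^ s - 1 = n * p ^ s + (p ^ s - 1) := by
      have := hp.out.pos; have : 0 < p ^ s := by positivity
      rw [add_one_mul]; omega
    have absorb := congrArg (Nat.cast : ℕ → ZMod p) (Nat.add_one_mul_choose_eq n m)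
    push_cast at absorb
    rw [hsplit, natCast_choose_mul_pow_add_mul_pow_add s n m (by omega) hd,
      natCast_choose_pow_sub_one s hd]
    push_cast
    linear_combination (-1 : ZMod p) ^ d * absorb

theorem pow_dvd_choose_mul_pow_add (s n m : ℕ) {r : ℕ} (hpr : ¬ p ∣ r) :
    p ^ s ∣ (n * p ^ s).choose (m * p ^ s + r) := by
  have hr0 : r ≠ 0 := by rintro rfl; exact hpr (dvd_zero p)
  refine Nat.dvd_choose_of_dvd_of_coprime_s17 (dvd_mul_left _ _) ?_ (by omega)
  rw [add_comm, Nat.coprime_add_mul_right_right]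
  exact ((Nat.Prime.coprime_iff_not_dvd hp.out).mpr hpr).pow_left s

theorem natCast_choose_mul_pow_add_div_pow_mul (s n m : ℕ) {r : ℕ} (hr : r < p ^ s)
    (hpr : ¬ p ∣ r) :
    ((((n * p ^ s).choose (m * p ^ s + r) / p ^ s : ℕ)) : ZMod p) * r =
      (-1) ^ (r - 1) * (m + 1) * n.choose (m + 1) := by
  have hr0 : r ≠ 0 := by rintro rfl; exact hpr (dvd_zero p)
  have hs : s ≠ 0 := by rintro rfl; rw [pow_zero] at hr; omega
  obtain ⟨q, hq⟩ := pow_dvd_choose_mul_pow_add s n m hpr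
  have hps : 0 < p ^ s := by have := hp.out.pos; positivity
  have absorb : n * (n * p ^ s - 1).choose (m * p ^ s + (r - 1)) = q * (m * p ^ s + r) := by
    have := Nat.mul_choose_sub_one_sub_one (n * p ^ s) (m * p ^ s + r) (by omega)
    rw [hq, show m * p ^ s + r - 1 = m * p ^ s + (r - 1) by omega] at this
    exact Nat.eq_of_mul_eq_mul_left hps (by linarith)
  have hps_zero : ((p ^ s : ℕ) : ZMod p) = 0 := by
    rw [Nat.cast_pow, ZMod.natCast_self, zero_pow hs]
  have absorb_mod_p := congrArg (Nat.cast : ℕ → ZMod p) absorb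
  push_cast at absorb_mod_p hps_zero
  rw [natCast_mul_choose_mul_pow_sub_one s n m (by omega), hps_zero] at absorb_mod_p
  rw [hq, Nat.mul_div_cancel_left q hps]
  linear_combination -absorb_mod_p

end ChooseModPrime

theorem stmt17_general (p s n m r : ℕ) (hp : p.Prime) (hr2 : r ≤ p ^ s - 1) (hpr : ¬ p ∣ r)
    (rinv : ℤ) (hinv : (r : ℤ) * rinv ≡ 1 [ZMOD (p : ℤ)]) :
    p ^ s ∣ (n * p ^ s).choose (m * p ^ s + r) ∧
    (((n * p ^ s).choose (m * p ^ s + r) / p ^ s : ℕ) : ℤ) ≡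
      (-1) ^ (r - 1) * rinv * (m + 1) * (n.choose (m + 1)) [ZMOD (p : ℤ)] := by
  have : Fact p.Prime := ⟨hp⟩
  have hr : r < p ^ s := by
    have : r ≠ 0 := by rintro rfl; exact hpr (dvd_zero p)
    omega
  refine ⟨pow_dvd_choose_mul_pow_add s n m hpr, ?_⟩
  have hinv' : (r : ZMod p) * rinv = 1 := by
    exact_mod_cast (ZMod.intCast_eq_intCast_iff _ _ _).mpr hinv
  have hquot := natCast_choose_mul_pow_add_div_pow_mul s n m hr hpr
  rw [← ZMod.intCast_eq_intCast_iff]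
  simp only [Int.cast_mul, Int.cast_pow, Int.cast_neg, Int.cast_one, Int.cast_natCast,
    Int.cast_add]
  linear_combination rinv * hquot -
    (((n * p ^ s).choose (m * p ^ s + r) / p ^ s : ℕ) : ZMod p) * hinv'

theorem stmt17 (p s n m r : ℕ) (hp : p.Prime) (hs : 1 ≤ s) (hmn : m ≤ n)
    (hr1 : 1 ≤ r) (hr2 : r ≤ p ^ s - 1) (hpr : ¬ p ∣ r) (hnm : m + 1 ≤ n)
    (rinv : ℤ) (hinv : (r : ℤ) * rinv ≡ 1 [ZMOD (p : ℤ)]) :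
    p ^ s ∣ (n * p ^ s).choose (m * p ^ s + r) ∧
    (((n * p ^ s).choose (m * p ^ s + r) / p ^ s : ℕ) : ℤ) ≡
      (-1) ^ (r - 1) * rinv * (m + 1) * (n.choose (m + 1)) [ZMOD (p : ℤ)] :=
  stmt17_general p s n m r hp hr2 hpr rinv hinv
end
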